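/- The CDF identities satisfy the recurrence F_{n,n}(t) = P_n(t) and F_{n,k}(t) = F_{n,k+1}(t) + C(n, k) · Σ_{i=k}^{n} A^{n,k}_i · P_i(t) for 1 ≤ k ≤ n−1, where X_1,...,X_n are exchangeable random variables. -/

import Mathlib

open MeasureTheory Finset

/-- Coefficients `A^{n,k}_i` defined by `A^{n,k}_k = 1` and
`A^{n,k}_i = -∑_{j=1}^{i-k} C(n-i+j, j) · A^{n,k}_{i-j}` for `i > k`. -/
def Acoef (n k : ℕ) : ℕ → ℤ
  | i =>
    if i ≤ k then (if i = k then 1 else 0)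
    else -∑ j ∈ (Finset.Icc 1 (i - k)).attach,
        ((n - i + j.1).choose j.1 : ℤ) * Acoef n k (i - j.1)
  termination_by i => i
  decreasing_by
    have hj := j.2
    simp only [Finset.mem_Icc] at hj
    omega

/-- `X 0, ..., X (n-1)` are exchangeable (jointly-identical) random variables:
the joint distribution is invariant under any permutation of the indices. -/
def Exchangeable {Ω : Type*} [MeasurableSpace Ω] (μ : MeasureTheory.Measure Ω) {n : ℕ}
    (X : Fin n → Ω → ℝ) : Prop :=
  ∀ σ : Equiv.Perm (Fin n),
    μ.map (fun ω => fun i => X (σ i) ω) = μ.map (fun ω => fun i => X i ω)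

/-- `P_j(t) = P(X_1 ≤ t, ..., X_j ≤ t)`, the CDF of the maximum of the first `j` variables. -/
noncomputable def Pmax {Ω : Type*} [MeasurableSpace Ω] (μ : MeasureTheory.Measure Ω) {n : ℕ}
    (X : Fin n → Ω → ℝ) (j : ℕ) (t : ℝ) : ℝ :=
  (μ {ω | ∀ i : Fin n, (i : ℕ) < j → X i ω ≤ t}).toReal

open scoped Classical in
/-- `F_{n,k}(t)`: the probability that at least `k` of the `n` variables are `≤ t`,
i.e. the CDF of the `k`-th smallest order statistic. -/
noncomputable def Fos {Ω : Type*} [MeasurableSpace Ω] (μ : MeasureTheory.Measure Ω) {n : ℕ}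
    (X : Fin n → Ω → ℝ) (k : ℕ) (t : ℝ) : ℝ :=
  (μ {ω | k ≤ (Finset.univ.filter fun i : Fin n => X i ω ≤ t).card}).toReal

/-! ### Auxiliary lemmas -/

open scoped Classical

lemma Acoef_eq {n k : ℕ} : ∀ i, k ≤ i → i ≤ n →
    Acoef n k i = (-1) ^ (i - k) * ((n - k).choose (i - k)) := by
  intro i
  induction i using Nat.strong_induction_on with
  | _ i IH =>
    intro hki hin
    rcases eq_or_lt_of_le hki with h | h
    · rw [Acoef]
      simp [← h]
    · rw [Acoef, if_neg (by omega)]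
      rw [Finset.sum_attach _ (fun j => ((n - i + j).choose j : ℤ) * Acoef n k (i - j))]
      set m := i - k with hm
      have hm1 : 1 ≤ m := by omega
      have hstep : ∑ j ∈ Finset.Icc 1 m, ((n - i + j).choose j : ℤ) * Acoef n k (i - j)
          = ∑ l ∈ Finset.range m, ((-1) ^ l * ((m.choose l : ℤ) * ((n - k).choose m : ℤ))) := by
        refine Finset.sum_nbij' (fun j => m - j) (fun l => m - l) ?_ ?_ ?_ ?_ ?_
        · intro j hj; simp only [Finset.mem_Icc] at hj; simp only [Finset.mem_range]; omega
        · intro l hl; simp only [Finset.mem_range] at hl; simp only [Finset.mem_Icc]; omega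
        · intro j hj; simp only [Finset.mem_Icc] at hj; show m - (m - j) = j; omega
        · intro l hl; simp only [Finset.mem_range] at hl; show m - (m - l) = l; omega
        · intro j hj
          simp only [Finset.mem_Icc] at hj
          show ((n - i + j).choose j : ℤ) * Acoef n k (i - j)
              = (-1) ^ (m - j) * ((m.choose (m - j) : ℤ) * ((n - k).choose m : ℤ))
          have h1 : n - i + j = n - k - (m - j) := by omega
          have h2 : i - j - k = m - j := by omega
          have h3 : Acoef n k (i - j) = (-1) ^ (m - j) * ((n - k).choose (m - j)) := by
            rw [IH (i - j) (by omega) (by omega) (by omega), h2]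
          rw [h3, h1]
          have h4 : ((n - k).choose m : ℤ) * ((m.choose (m - j)) : ℤ)
              = ((n - k).choose (m - j) : ℤ) * (((n - k) - (m - j)).choose (m - (m - j)) : ℤ) := by
            exact_mod_cast congrArg (Nat.cast : ℕ → ℤ)
              (Nat.choose_mul (n := n - k) (by omega : m - j ≤ m))
          have h5 : m - (m - j) = j := by omega
          rw [h5] at h4
          linear_combination ((-1 : ℤ)) ^ (m - j) * h4.symm
      rw [hstep]
      have h6 : ∑ l ∈ Finset.range (m + 1), (-1 : ℤ) ^ l * (m.choose l) = 0 :=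
        Int.alternating_sum_range_choose_of_ne (by omega)
      rw [Finset.sum_range_succ] at h6
      have h7 : ∑ l ∈ Finset.range m, (-1 : ℤ) ^ l * (m.choose l) = -(-1) ^ m := by
        simp only [Nat.choose_self, Nat.cast_one, mul_one] at h6
        linarith
      calc -∑ l ∈ Finset.range m, ((-1 : ℤ) ^ l * ((m.choose l : ℤ) * ((n - k).choose m : ℤ)))
          = -((∑ l ∈ Finset.range m, (-1 : ℤ) ^ l * (m.choose l)) * ((n - k).choose m : ℤ)) := by
            rw [Finset.sum_mul]
            congr 1
            exact Finset.sum_congr rfl fun l _ => (mul_assoc _ _ _).symm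
        _ = (-1) ^ m * ((n - k).choose m : ℤ) := by rw [h7]; ring

section MeasAux

variable {Ω : Type*} [MeasurableSpace Ω] (μ : Measure Ω) [IsProbabilityMeasure μ]
  {n : ℕ} (X : Fin n → Ω → ℝ) (t : ℝ)

omit [IsProbabilityMeasure μ] in
lemma meas_atom (hmeas : ∀ i, Measurable (X i)) (A : Finset (Fin n)) :
    MeasurableSet {ω | (Finset.univ.filter fun i : Fin n => X i ω ≤ t) = A} := by
  have hset : {ω | (Finset.univ.filter fun i : Fin n => X i ω ≤ t) = A}
      = ⋂ i : Fin n, {ω | X i ω ≤ t ↔ i ∈ A} := by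
    ext ω
    simp only [Set.mem_setOf_eq, Set.mem_iInter, Finset.ext_iff, Finset.mem_filter,
      Finset.mem_univ, true_and]
  rw [hset]
  refine MeasurableSet.iInter fun i => ?_
  by_cases hi : i ∈ A
  · have : {ω | X i ω ≤ t ↔ i ∈ A} = X i ⁻¹' Set.Iic t := by
      ext ω; simp [hi]
    rw [this]; exact (hmeas i) measurableSet_Iic
  · have : {ω | X i ω ≤ t ↔ i ∈ A} = (X i ⁻¹' Set.Iic t)ᶜ := by
      ext ω; simp [hi]
    rw [this]; exact ((hmeas i) measurableSet_Iic).compl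

lemma meas_pred_eq_sum (hmeas : ∀ i, Measurable (X i)) (s : Finset (Finset (Fin n)))
    (pred : Finset (Fin n) → Prop) (hs : ∀ A, A ∈ s ↔ pred A) :
    (μ {ω | pred (Finset.univ.filter fun i : Fin n => X i ω ≤ t)}).toReal
      = ∑ A ∈ s,
          (μ {ω | (Finset.univ.filter fun i : Fin n => X i ω ≤ t) = A}).toReal := by
  have hset : {ω | pred (Finset.univ.filter fun i : Fin n => X i ω ≤ t)}
      = ⋃ A ∈ s, {ω | (Finset.univ.filter fun i : Fin n => X i ω ≤ t) = A} := by
    ext ω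
    simp only [Set.mem_setOf_eq, Set.mem_iUnion]
    exact ⟨fun h => ⟨_, (hs _).mpr h, rfl⟩, fun ⟨A, hA, hFA⟩ => hFA ▸ ((hs A).mp hA)⟩
  rw [hset, measure_biUnion_finset ?_ (fun A _ => meas_atom X t hmeas A),
    ENNReal.toReal_sum (fun A _ => measure_ne_top μ _)]
  intro A _ B _ hAB
  simp only [Function.onFun, Set.disjoint_left, Set.mem_setOf_eq]
  intro ω h1 h2
  exact hAB (h1 ▸ h2 ▸ rfl)

omit [IsProbabilityMeasure μ] in
lemma exch_eq (hmeas : ∀ i, Measurable (X i)) (hexch : Exchangeable μ X) (A : Finset (Fin n)) :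
    μ {ω | ∀ i ∈ A, X i ω ≤ t}
      = μ {ω | ∀ i : Fin n, (i : ℕ) < A.card → X i ω ≤ t} := by
  have hAn : A.card ≤ n := by
    simpa using Finset.card_le_univ A
  have h1 : Fintype.card {i : Fin n // (i : ℕ) < A.card} = A.card :=
    Fintype.card_fin_lt_of_le hAn
  have h2 : Fintype.card {i : Fin n // i ∈ A} = A.card := Fintype.card_coe A
  have h3 : Fintype.card {i : Fin n // ¬ ((i : ℕ) < A.card)} = n - A.card := by
    rw [Fintype.card_subtype_compl, h1, Fintype.card_fin]
  have h4 : Fintype.card {i : Fin n // ¬ (i ∈ A)} = n - A.card := by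
    rw [Fintype.card_subtype_compl, h2, Fintype.card_fin]
  let e := Fintype.equivOfCardEq (h1.trans h2.symm)
  let f := Fintype.equivOfCardEq (h3.trans h4.symm)
  let σ : Equiv.Perm (Fin n) := Equiv.subtypeCongr e f
  have hσ : ∀ i : Fin n, ((i : ℕ) < A.card ↔ σ i ∈ A) := by
    intro i
    by_cases h : (i : ℕ) < A.card
    · have hσi : σ i = (e ⟨i, h⟩ : Fin n) := by
        simp [σ, Equiv.subtypeCongr, h]
      rw [hσi]
      exact iff_of_true h (e ⟨i, h⟩).2
    · have hσi : σ i = (f ⟨i, h⟩ : Fin n) := by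
        simp [σ, Equiv.subtypeCongr, h]
      rw [hσi]
      exact iff_of_false h (f ⟨i, h⟩).2
  have hjoint : Measurable fun ω => fun i : Fin n => X i ω :=
    measurable_pi_lambda _ hmeas
  have hjointσ : Measurable fun ω => fun i : Fin n => X (σ i) ω :=
    measurable_pi_lambda _ fun i => hmeas (σ i)
  set V : Set (Fin n → ℝ) := {v | ∀ i : Fin n, (i : ℕ) < A.card → v i ≤ t} with hV
  have hVm : MeasurableSet V := by
    have : V = ⋂ i : Fin n, ⋂ (_ : (i : ℕ) < A.card), (fun v : Fin n → ℝ => v i) ⁻¹' Set.Iic t := by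
      ext v; simp [hV]
    rw [this]
    exact MeasurableSet.iInter fun i => MeasurableSet.iInter fun _ =>
      (measurable_pi_apply i) measurableSet_Iic
  have hpre : (fun ω => fun i : Fin n => X (σ i) ω) ⁻¹' V = {ω | ∀ i ∈ A, X i ω ≤ t} := by
    ext ω
    simp only [Set.mem_preimage, hV, Set.mem_setOf_eq]
    constructor
    · intro h j hj
      have h1' : σ (σ.symm j) = j := σ.apply_symm_apply j
      have h2' : ((σ.symm j : Fin n) : ℕ) < A.card := (hσ (σ.symm j)).mpr (by rw [h1']; exact hj)
      have := h (σ.symm j) h2'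
      rwa [h1'] at this
    · intro h i hi
      exact h (σ i) ((hσ i).mp hi)
  calc μ {ω | ∀ i ∈ A, X i ω ≤ t}
      = μ.map (fun ω => fun i : Fin n => X (σ i) ω) V := by
        rw [Measure.map_apply hjointσ hVm, hpre]
    _ = μ.map (fun ω => fun i : Fin n => X i ω) V := by rw [hexch σ]
    _ = μ {ω | ∀ i : Fin n, (i : ℕ) < A.card → X i ω ≤ t} := by
        rw [Measure.map_apply hjoint hVm]
        rfl

end MeasAux

section CombAux

variable {n : ℕ}

lemma sum_between_neg_one (A C : Finset (Fin n)) (hAC : A ⊆ C) :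
    ∑ B ∈ Finset.univ.filter (fun B => A ⊆ B ∧ B ⊆ C), (-1 : ℝ) ^ (B.card - A.card)
      = if C = A then 1 else 0 := by
  have hbij : ∑ B ∈ Finset.univ.filter (fun B => A ⊆ B ∧ B ⊆ C), (-1 : ℝ) ^ (B.card - A.card)
      = ∑ D ∈ (C \ A).powerset, (-1 : ℝ) ^ D.card := by
    refine Finset.sum_nbij' (fun B => B \ A) (fun D => A ∪ D) ?_ ?_ ?_ ?_ ?_
    · intro B hB
      simp only [Finset.mem_filter, Finset.mem_univ, true_and] at hB
      simp only [Finset.mem_powerset]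
      exact Finset.sdiff_subset_sdiff hB.2 Finset.Subset.rfl
    · intro D hD
      simp only [Finset.mem_powerset] at hD
      simp only [Finset.mem_filter, Finset.mem_univ, true_and]
      constructor
      · exact Finset.subset_union_left
      · refine Finset.union_subset hAC (hD.trans Finset.sdiff_subset)
    · intro B hB
      simp only [Finset.mem_filter, Finset.mem_univ, true_and] at hB
      exact Finset.union_sdiff_of_subset hB.1
    · intro D hD
      simp only [Finset.mem_powerset] at hD
      refine Finset.union_sdiff_cancel_left ?_
      refine Finset.disjoint_left.mpr fun x hxA hxD => ?_
      exact (Finset.mem_sdiff.mp (hD hxD)).2 hxA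
    · intro B hB
      simp only [Finset.mem_filter, Finset.mem_univ, true_and] at hB
      rw [Finset.card_sdiff_of_subset hB.1]
  rw [hbij]
  have hz : ((∑ D ∈ (C \ A).powerset, (-1 : ℤ) ^ D.card : ℤ) : ℝ)
      = ∑ D ∈ (C \ A).powerset, (-1 : ℝ) ^ D.card := by push_cast; rfl
  rw [← hz, Finset.sum_powerset_neg_one_pow_card]
  by_cases h : C = A
  · simp [h]
  · have : ¬ (C \ A = ∅) := by
      rw [Finset.sdiff_eq_empty_iff_subset]
      exact fun hCA => h (Finset.Subset.antisymm hCA hAC)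
    simp [this, h]

lemma mobius_inv (m e : Finset (Fin n) → ℝ)
    (h : ∀ A, ∑ B ∈ Finset.univ.filter (fun B => A ⊆ B), m B = e A) (A : Finset (Fin n)) :
    m A = ∑ B ∈ Finset.univ.filter (fun B => A ⊆ B), (-1 : ℝ) ^ (B.card - A.card) * e B := by
  have step1 : ∑ B ∈ Finset.univ.filter (fun B => A ⊆ B), (-1 : ℝ) ^ (B.card - A.card) * e B
      = ∑ B ∈ Finset.univ.filter (fun B => A ⊆ B),
          ∑ C ∈ Finset.univ.filter (fun C => B ⊆ C), (-1 : ℝ) ^ (B.card - A.card) * m C := by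
    refine Finset.sum_congr rfl fun B _ => ?_
    rw [← Finset.mul_sum, h B]
  rw [step1]
  rw [Finset.sum_comm' (s' := fun C => Finset.univ.filter (fun B => A ⊆ B ∧ B ⊆ C))
      (t' := Finset.univ.filter (fun C => A ⊆ C)) ?_]
  · have step2 : ∀ C ∈ Finset.univ.filter (fun C => A ⊆ C),
        ∑ B ∈ Finset.univ.filter (fun B => A ⊆ B ∧ B ⊆ C), (-1 : ℝ) ^ (B.card - A.card) * m C
          = (if C = A then 1 else 0) * m C := by
      intro C hC
      simp only [Finset.mem_filter, Finset.mem_univ, true_and] at hC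
      rw [← Finset.sum_mul, sum_between_neg_one A C hC]
    rw [Finset.sum_congr rfl step2]
    simp only [ite_mul, one_mul, zero_mul]
    rw [Finset.sum_ite_eq' (Finset.univ.filter (fun C => A ⊆ C)) A m]
    simp
  · intro B C
    simp only [Finset.mem_filter, Finset.mem_univ, true_and]
    constructor
    · rintro ⟨h1, h2⟩; exact ⟨⟨h1, h2⟩, h1.trans h2⟩
    · rintro ⟨⟨h1, h2⟩, _⟩; exact ⟨h1, h2⟩

lemma sum_superset_eq (A : Finset (Fin n)) (f : Finset (Fin n) → ℝ) :
    ∑ B ∈ Finset.univ.filter (fun B => A ⊆ B), f B = ∑ D ∈ Aᶜ.powerset, f (A ∪ D) := by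
  refine Finset.sum_nbij' (fun B => B \ A) (fun D => A ∪ D) ?_ ?_ ?_ ?_ ?_
  · intro B hB
    simp only [Finset.mem_filter, Finset.mem_univ, true_and] at hB
    simp only [Finset.mem_powerset]
    intro x hx
    simp only [Finset.mem_compl]
    exact (Finset.mem_sdiff.mp hx).2
  · intro D _
    simp only [Finset.mem_filter, Finset.mem_univ, true_and]
    exact Finset.subset_union_left
  · intro B hB
    simp only [Finset.mem_filter, Finset.mem_univ, true_and] at hB
    exact Finset.union_sdiff_of_subset hB
  · intro D hD
    simp only [Finset.mem_powerset] at hD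
    refine Finset.union_sdiff_cancel_left ?_
    refine Finset.disjoint_left.mpr fun x hxA hxD => ?_
    exact (Finset.mem_compl.mp (hD hxD)) hxA
  · intro B hB
    simp only [Finset.mem_filter, Finset.mem_univ, true_and] at hB
    rw [Finset.union_sdiff_of_subset hB]

end CombAux

section AtomAux

variable {Ω : Type*} [MeasurableSpace Ω] (μ : Measure Ω) [IsProbabilityMeasure μ]
  {n : ℕ} (X : Fin n → Ω → ℝ) (t : ℝ)

lemma atom_eq (hmeas : ∀ i, Measurable (X i)) (hexch : Exchangeable μ X)
    {k : ℕ} (A : Finset (Fin n)) (hA : A.card = k) :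
    (μ {ω | (Finset.univ.filter fun i : Fin n => X i ω ≤ t) = A}).toReal
      = ∑ i ∈ Finset.Icc k n, (Acoef n k i : ℝ) * Pmax μ X i t := by
  have hkn : k ≤ n := by
    rw [← hA]
    simpa using Finset.card_le_univ A
  have hsum : ∀ B : Finset (Fin n),
      ∑ C ∈ Finset.univ.filter (fun C => B ⊆ C),
        (μ {ω | (Finset.univ.filter fun i : Fin n => X i ω ≤ t) = C}).toReal
      = Pmax μ X B.card t := by
    intro B
    have h1 := meas_pred_eq_sum μ X t hmeas (Finset.univ.filter (fun C => B ⊆ C))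
      (fun C => B ⊆ C) (fun C => by simp)
    have h2 : {ω | (fun C : Finset (Fin n) => B ⊆ C)
          (Finset.univ.filter fun i : Fin n => X i ω ≤ t)} = {ω | ∀ i ∈ B, X i ω ≤ t} := by
      ext ω; simp [Finset.subset_iff]
    rw [h2] at h1
    rw [← h1, exch_eq μ X t hmeas hexch B]
    rfl
  have hmob := mobius_inv
    (fun B => (μ {ω | (Finset.univ.filter fun i : Fin n => X i ω ≤ t) = B}).toReal)
    (fun B => Pmax μ X B.card t) hsum A
  rw [hmob, sum_superset_eq]
  have hcongr : ∀ D ∈ Aᶜ.powerset,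
      (-1 : ℝ) ^ ((A ∪ D).card - A.card) * Pmax μ X (A ∪ D).card t
        = (fun d => (-1 : ℝ) ^ d * Pmax μ X (k + d) t) (D.card) := by
    intro D hD
    simp only [Finset.mem_powerset] at hD
    have hdisj : Disjoint A D := by
      refine Finset.disjoint_left.mpr fun x hxA hxD => ?_
      exact (Finset.mem_compl.mp (hD hxD)) hxA
    rw [Finset.card_union_of_disjoint hdisj, hA]
    simp
  rw [Finset.sum_congr rfl hcongr,
    Finset.sum_powerset_apply_card (fun d => (-1 : ℝ) ^ d * Pmax μ X (k + d) t)]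
  have hcc : Aᶜ.card = n - k := by
    rw [Finset.card_compl, Fintype.card_fin, hA]
  rw [hcc]
  refine Finset.sum_nbij' (fun d => k + d) (fun i => i - k) ?_ ?_ ?_ ?_ ?_
  · intro d hd; simp only [Finset.mem_range] at hd; simp only [Finset.mem_Icc]; omega
  · intro i hi; simp only [Finset.mem_Icc] at hi; simp only [Finset.mem_range]; omega
  · intro d hd; simp only [Finset.mem_range] at hd; show k + d - k = d; omega
  · intro i hi; simp only [Finset.mem_Icc] at hi; show k + (i - k) = i; omega
  · intro d hd
    simp only [Finset.mem_range] at hd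
    show ((n - k).choose d) • ((-1 : ℝ) ^ d * Pmax μ X (k + d) t)
        = (Acoef n k (k + d) : ℝ) * Pmax μ X (k + d) t
    have hac : Acoef n k (k + d) = (-1) ^ d * ((n - k).choose d : ℤ) := by
      rw [Acoef_eq (k + d) (by omega) (by omega)]
      congr 1 <;> simp
    rw [hac]
    push_cast
    rw [nsmul_eq_mul]
    ring

end AtomAux

/-- The CDFs of the order statistics of exchangeable random variables satisfy
`F_{n,n}(t) = P_n(t)` and, for `1 ≤ k ≤ n-1`,
`F_{n,k}(t) = F_{n,k+1}(t) + C(n,k) · ∑_{i=k}^{n} A^{n,k}_i P_i(t)`. -/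
theorem Fos_recurrence {Ω : Type*} [MeasurableSpace Ω] (μ : Measure Ω)
    [IsProbabilityMeasure μ] {n : ℕ} (X : Fin n → Ω → ℝ) (hmeas : ∀ i, Measurable (X i))
    (hexch : Exchangeable μ X) (t : ℝ) :
    Fos μ X n t = Pmax μ X n t ∧
      ∀ k : ℕ, 1 ≤ k → k ≤ n - 1 →
        Fos μ X k t = Fos μ X (k + 1) t +
          (n.choose k : ℝ) * ∑ i ∈ Finset.Icc k n, (Acoef n k i : ℝ) * Pmax μ X i t := by
  constructor
  · have hset : {ω | n ≤ (Finset.univ.filter fun i : Fin n => X i ω ≤ t).card}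
        = {ω | ∀ i : Fin n, (i : ℕ) < n → X i ω ≤ t} := by
      ext ω
      simp only [Set.mem_setOf_eq]
      constructor
      · intro h i _
        have hcard : (Finset.univ.filter fun i : Fin n => X i ω ≤ t).card = n :=
          le_antisymm (by simpa using Finset.card_le_univ (Finset.univ.filter fun i : Fin n => X i ω ≤ t)) h
        have huniv : (Finset.univ.filter fun i : Fin n => X i ω ≤ t) = Finset.univ :=
          Finset.eq_univ_of_card _ (by rw [hcard, Fintype.card_fin])
        have hmem := Finset.eq_univ_iff_forall.mp huniv i
        exact (Finset.mem_filter.mp hmem).2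
      · intro h
        have huniv : (Finset.univ.filter fun i : Fin n => X i ω ≤ t) = Finset.univ := by
          refine Finset.eq_univ_iff_forall.mpr fun i => ?_
          simp only [Finset.mem_filter, Finset.mem_univ, true_and]
          exact h i i.isLt
        rw [huniv]
        simp
    show (μ _).toReal = (μ _).toReal
    rw [hset]
  · intro k hk1 hkn1
    have hkn : k < n := by omega
    have h1 := meas_pred_eq_sum μ X t hmeas
      (Finset.univ.filter (fun A : Finset (Fin n) => k ≤ A.card))
      (fun A => k ≤ A.card) (fun A => by simp)
    have h2 := meas_pred_eq_sum μ X t hmeas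
      (Finset.univ.filter (fun A : Finset (Fin n) => k + 1 ≤ A.card))
      (fun A => k + 1 ≤ A.card) (fun A => by simp)
    have hsplit : (Finset.univ.filter (fun A : Finset (Fin n) => k ≤ A.card))
        = (Finset.univ.filter (fun A : Finset (Fin n) => A.card = k))
          ∪ (Finset.univ.filter (fun A : Finset (Fin n) => k + 1 ≤ A.card)) := by
      ext A
      simp only [Finset.mem_union, Finset.mem_filter, Finset.mem_univ, true_and]
      omega
    have hdisj : Disjoint (Finset.univ.filter (fun A : Finset (Fin n) => A.card = k))
        (Finset.univ.filter (fun A : Finset (Fin n) => k + 1 ≤ A.card)) := by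
      refine Finset.disjoint_left.mpr fun A hA1 hA2 => ?_
      simp only [Finset.mem_filter, Finset.mem_univ, true_and] at hA1 hA2
      omega
    have hcardfilter : (Finset.univ.filter (fun A : Finset (Fin n) => A.card = k)).card
        = n.choose k := by
      have : (Finset.univ.filter (fun A : Finset (Fin n) => A.card = k))
          = Finset.powersetCard k (Finset.univ : Finset (Fin n)) := by
        rw [Finset.powersetCard_eq_filter, Finset.powerset_univ]
      rw [this, Finset.card_powersetCard, Finset.card_univ, Fintype.card_fin]
    calc Fos μ X k t
        = ∑ A ∈ Finset.univ.filter (fun A : Finset (Fin n) => k ≤ A.card),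
            (μ {ω | (Finset.univ.filter fun i : Fin n => X i ω ≤ t) = A}).toReal := h1
      _ = ∑ A ∈ Finset.univ.filter (fun A : Finset (Fin n) => A.card = k),
            (μ {ω | (Finset.univ.filter fun i : Fin n => X i ω ≤ t) = A}).toReal
          + ∑ A ∈ Finset.univ.filter (fun A : Finset (Fin n) => k + 1 ≤ A.card),
            (μ {ω | (Finset.univ.filter fun i : Fin n => X i ω ≤ t) = A}).toReal := by
          rw [hsplit, Finset.sum_union hdisj]
      _ = ∑ A ∈ Finset.univ.filter (fun A : Finset (Fin n) => A.card = k),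
            (∑ i ∈ Finset.Icc k n, (Acoef n k i : ℝ) * Pmax μ X i t)
          + Fos μ X (k + 1) t := by
          congr 1
          · refine Finset.sum_congr rfl fun A hA => ?_
            simp only [Finset.mem_filter, Finset.mem_univ, true_and] at hA
            exact atom_eq μ X t hmeas hexch A hA
          · exact h2.symm
      _ = Fos μ X (k + 1) t +
          (n.choose k : ℝ) * ∑ i ∈ Finset.Icc k n, (Acoef n k i : ℝ) * Pmax μ X i t := by
          rw [Finset.sum_const, hcardfilter, nsmul_eq_mul]
          ring
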